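/- Let Θ, Θ̂ be symmetric monotone Toeplitz matrices and Π, Π̂ permutation matrices in a subset S'. Then ‖Π̂ Θ Π̂ᵀ − Π Θ Πᵀ‖_F ≤ 2·‖Π̂ Θ̂ Π̂ᵀ − Π Θ Πᵀ‖_F. -/

import Mathlib

/-- Symmetric Toeplitz matrix with diagonal values `θ |i-j|`. -/
noncomputable def toep (n : ℕ) (θ : ℕ → ℝ) : Matrix (Fin n) (Fin n) ℝ :=
  fun i j => θ (((i : ℤ) - (j : ℤ)).natAbs)

/-- Frobenius norm of a real matrix. -/
noncomputable def frob {n : ℕ} (A : Matrix (Fin n) (Fin n) ℝ) : ℝ :=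
  Real.sqrt (∑ i, ∑ j, (A i j) ^ 2)

/-!
Write `A^σ` for `A.submatrix σ σ`. By the triangle inequality and the invariance of the Frobenius
norm under `A ↦ A^σ`,
`‖Θ^π̂ − Θ^π‖ ≤ ‖Θ^π̂ − Θ̂^π̂‖ + ‖Θ̂^π̂ − Θ^π‖ = ‖Θ̂ − Θ‖ + ‖Θ̂^π̂ − Θ^π‖`,
so it suffices that `‖Θ̂ − Θ‖ ≤ ‖Θ̂^σ − Θ‖` for every permutation `σ`. Expanding the squares, this
says `∑ Θ̂^σ ⊙ Θ ≤ ∑ Θ̂ ⊙ Θ`. On the diagonal both sides agree, and off the diagonal the entries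
of `Θ` and `Θ̂` are nonincreasing functions of `|i - j|`, hence monovary, so the rearrangement
inequality applies.
-/

open Finset Matrix
open scoped Matrix.Norms.Frobenius

lemma antitoneOn_Icc_of_succ_le {β : Type*} [Preorder β] {f : ℕ → β} {a b : ℕ}
    (hf : ∀ k, a ≤ k → k + 1 ≤ b → f (k + 1) ≤ f k) : AntitoneOn f (Set.Icc a b) :=
  antitoneOn_of_succ_le Set.ordConnected_Icc fun k _ hk hk' => by
    simpa only [Order.succ_eq_add_one] using hf k hk.1 hk'.2

theorem MonovaryOn.sum_comp_perm_mul_le_sum_mul_of_mem_iff {ι α : Type*}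
    [Semiring α] [LinearOrder α] [IsStrictOrderedRing α] [ExistsAddOfLE α] {s : Finset ι}
    {f g : ι → α} {σ : Equiv.Perm ι}
    (hfg : MonovaryOn f g s) (hσ : ∀ i, σ i ∈ s ↔ i ∈ s) :
    ∑ i ∈ s, f (σ i) * g i ≤ ∑ i ∈ s, f i * g i := by
  have hsub : Monovary (fun i : s => f i) (fun i : s => g i) := fun i j h => hfg i.2 j.2 h
  simpa only [← Finset.sum_coe_sort s, Equiv.Perm.subtypePerm_apply] using
    hsub.sum_comp_perm_mul_le_sum_mul (σ := σ.subtypePerm hσ)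

namespace Matrix

variable {l m n o α : Type*} [Fintype l] [Fintype m] [Fintype n] [Fintype o]

theorem frobenius_norm_submatrix_equiv [SeminormedAddCommGroup α] (A : Matrix m n α)
    (e₁ : l ≃ m) (e₂ : o ≃ n) : ‖A.submatrix e₁ e₂‖ = ‖A‖ := by
  simp only [frobenius_norm_def, submatrix_apply]
  congr 1
  exact Fintype.sum_equiv e₁ _ _ fun i => Fintype.sum_equiv e₂ _ _ fun j => rfl

theorem frobenius_norm_sq_real (A : Matrix m n ℝ) : ‖A‖ ^ 2 = ∑ i, ∑ j, A i j ^ 2 := by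
  rw [frobenius_norm_def, ← Real.rpow_natCast, ← Real.rpow_mul (by positivity)]
  norm_num

theorem frobenius_norm_sub_sq_real (A B : Matrix m n ℝ) :
    ‖A - B‖ ^ 2 = ‖A‖ ^ 2 - 2 * ∑ i, ∑ j, A i j * B i j + ‖B‖ ^ 2 := by
  simp only [frobenius_norm_sq_real, sub_apply, sub_sq, sum_add_distrib, sum_sub_distrib, mul_sum,
    mul_assoc]

theorem frobenius_norm_sub_le_norm_submatrix_sub (A B : Matrix m m ℝ) (σ : Equiv.Perm m)
    (h : ∑ i, ∑ j, A (σ i) (σ j) * B i j ≤ ∑ i, ∑ j, A i j * B i j) :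
    ‖A - B‖ ≤ ‖A.submatrix σ σ - B‖ := by
  have hσ : ‖A.submatrix σ σ‖ = ‖A‖ := frobenius_norm_submatrix_equiv A σ σ
  refine (pow_le_pow_iff_left₀ (norm_nonneg _) (norm_nonneg _) two_ne_zero).mp ?_
  rw [frobenius_norm_sub_sq_real, frobenius_norm_sub_sq_real, hσ]
  simp only [submatrix_apply]
  linarith

end Matrix

lemma frob_eq_norm {n : ℕ} (A : Matrix (Fin n) (Fin n) ℝ) : frob A = ‖A‖ := by
  rw [frob, ← frobenius_norm_sq_real, Real.sqrt_sq (norm_nonneg A)]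

section Toeplitz

variable {n : ℕ} {θ θh : ℕ → ℝ}

lemma natAbs_sub_mem_Icc_of_ne {i j : Fin n} (h : i ≠ j) :
    ((i : ℤ) - j).natAbs ∈ Set.Icc 1 (n - 1) := by
  have : (i : ℕ) ≠ j := Fin.val_ne_of_ne h
  have := i.isLt
  have := j.isLt
  constructor <;> omega

lemma monovaryOn_toep (hθ : AntitoneOn θ (Set.Icc 1 (n - 1)))
    (hθh : AntitoneOn θh (Set.Icc 1 (n - 1))) :
    MonovaryOn (fun p : Fin n × Fin n => toep n θh p.1 p.2) (fun p => toep n θ p.1 p.2)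
      {p | p.1 ≠ p.2} := by
  set d : Fin n × Fin n → ℕ := fun p => ((p.1 : ℤ) - p.2).natAbs
  have hd : d '' {p | p.1 ≠ p.2} ⊆ Set.Icc 1 (n - 1) := by
    rintro _ ⟨p, hp, rfl⟩
    exact natAbs_sub_mem_Icc_of_ne hp
  exact ((monovaryOn_self d _).comp_antitoneOn_right (hθh.mono hd)).symm.comp_antitoneOn_right
    (hθ.mono hd)

lemma sum_toep_submatrix_mul_toep_le (hθ : AntitoneOn θ (Set.Icc 1 (n - 1)))
    (hθh : AntitoneOn θh (Set.Icc 1 (n - 1))) (σ : Equiv.Perm (Fin n)) :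
    ∑ i, ∑ j, toep n θh (σ i) (σ j) * toep n θ i j ≤ ∑ i, ∑ j, toep n θh i j * toep n θ i j := by
  set s := (univ : Finset (Fin n)).offDiag
  have hσ : ∀ p, σ.prodCongr σ p ∈ s ↔ p ∈ s := by simp [s]
  have hdiag : ∀ p ∈ sᶜ, toep n θh (σ p.1) (σ p.2) = toep n θh p.1 p.2 := by
    intro p hp
    simp_all [s, toep]
  simp only [← Fintype.sum_prod_type']
  rw [← sum_add_sum_compl s, ← sum_add_sum_compl s]
  gcongr ?_ + ?_
  · have hmono := (monovaryOn_toep hθ hθh).subset (s := s)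
      fun p hp => by simpa [s] using hp
    exact hmono.sum_comp_perm_mul_le_sum_mul_of_mem_iff hσ
  · exact (sum_congr rfl fun p hp => by rw [hdiag p hp]).le

lemma norm_toep_sub_le_norm_submatrix_sub (hθ : AntitoneOn θ (Set.Icc 1 (n - 1)))
    (hθh : AntitoneOn θh (Set.Icc 1 (n - 1))) (π πh : Equiv.Perm (Fin n)) :
    ‖toep n θh - toep n θ‖ ≤ ‖(toep n θh).submatrix πh πh - (toep n θ).submatrix π π‖ := by
  set σ := π.symm.trans πh
  have hreindex : (toep n θh).submatrix πh πh - (toep n θ).submatrix π π =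
      ((toep n θh).submatrix σ σ - toep n θ).submatrix π π := by
    ext i j
    simp [σ]
  rw [hreindex, frobenius_norm_submatrix_equiv]
  exact frobenius_norm_sub_le_norm_submatrix_sub _ _ σ (sum_toep_submatrix_mul_toep_le hθ hθh σ)

end Toeplitz

/-- For symmetric monotone Toeplitz matrices `Θ`, `Θ̂` and permutations `Π`, `Π̂`,
`‖Π̂ Θ Π̂ᵀ − Π Θ Πᵀ‖_F ≤ 2 ‖Π̂ Θ̂ Π̂ᵀ − Π Θ Πᵀ‖_F`. -/
theorem stmt5 (n : ℕ) (θ θh : ℕ → ℝ)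
    (h1 : ∀ k, 1 ≤ k → k + 1 ≤ n - 1 → θ (k + 1) ≤ θ k)
    (h2 : ∀ k, 1 ≤ k → k + 1 ≤ n - 1 → θh (k + 1) ≤ θh k)
    (π πh : Equiv.Perm (Fin n)) :
    frob ((toep n θ).submatrix πh πh - (toep n θ).submatrix π π) ≤
      2 * frob ((toep n θh).submatrix πh πh - (toep n θ).submatrix π π) := by
  have hkey := norm_toep_sub_le_norm_submatrix_sub (antitoneOn_Icc_of_succ_le h1)
    (antitoneOn_Icc_of_succ_le h2) π πh
  rw [frob_eq_norm, frob_eq_norm]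
  calc ‖(toep n θ).submatrix πh πh - (toep n θ).submatrix π π‖
      ≤ ‖(toep n θ).submatrix πh πh - (toep n θh).submatrix πh πh‖ +
          ‖(toep n θh).submatrix πh πh - (toep n θ).submatrix π π‖ :=
        norm_sub_le_norm_sub_add_norm_sub _ _ _
    _ = ‖toep n θh - toep n θ‖ + ‖(toep n θh).submatrix πh πh - (toep n θ).submatrix π π‖ := by
        rw [norm_sub_rev (toep n θh),
          ← frobenius_norm_submatrix_equiv (toep n θ - toep n θh) πh πh]
        rfl
    _ ≤ 2 * ‖(toep n θh).submatrix πh πh - (toep n θ).submatrix π π‖ := by linarith
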